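/- For the root system A_{n-1} (Weyl group S_n), the generalized Chebyshev polynomial of the highest root ρ₀ = ϖ₁ + ϖ_{n−1} satisfies the identity n·z₁·z_{n−1} = (n−1)·T_{ϖ₁+ϖ_{n−1}}(z) + 1, where z₁ = T_{ϖ₁} and z_{n−1} = T_{ϖ_{n−1}}. Consequently, since z_{n−1} = conj(z₁) on the Chebyshev image, min over the image of T_{ρ₀} equals min (n|z₁|² − 1)/(n−1) ≥ −1/(n−1), and the spectral bound gives χ(Λ(A_{n−1})) ≥ n. -/

import Mathlib

noncomputable section
open scoped BigOperators

abbrev EV (n : ℕ) := EuclideanSpace ℝ (Fin n)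

/-- The Weyl group of `A_{n−1}` is `Sₙ`, acting on `ℝⁿ` by permuting coordinates. -/
def permAct {n : ℕ} (p : Equiv.Perm (Fin n)) (μ : EV n) : EV n := WithLp.toLp 2 (fun j => μ (p j))

/-- The generalized cosine for the Weyl group `Sₙ` of `A_{n−1}`. -/
def aGencos {n : ℕ} (μ u : EV n) : ℂ :=
  ((Fintype.card (Equiv.Perm (Fin n)) : ℂ))⁻¹ *
    ∑ p : Equiv.Perm (Fin n),
      Complex.exp (-(2 * Real.pi * Complex.I) * ((inner ℝ (permAct p μ) u : ℝ) : ℂ))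

/-- The fundamental weight `ϖ₁ = e₁ − (1/n)·(1,…,1)` of `A_{n−1}`. -/
def aϖ₁ {n : ℕ} : EV n := WithLp.toLp 2 (fun j : Fin n => (if (j : ℕ) = 0 then 1 - 1 / n else -(1 / n) : ℝ))

/-- The fundamental weight `ϖ_{n−1} = (1/n)·(1,…,1) − eₙ` of `A_{n−1}`. -/
def aϖlast {n : ℕ} : EV n := WithLp.toLp 2 (fun j : Fin n => (if (j : ℕ) = n - 1 then 1 / n - 1 else 1 / n : ℝ))

/-!
Products of generalized cosines average over a Weyl orbit: `T_μ T_ν = |W|⁻¹ ∑_w T_{μ + wν}`.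
For `μ = ϖ₁`, `ν = ϖ_{n-1}` the vectors `ϖ₁ + wϖ_{n-1}` are `e₀ - e_j`, all `j` occurring equally
often: `j = 0` gives `T_0 = 1` and the other `n - 1` are Weyl conjugates of `ρ₀`, whence
`n z₁ z_{n-1} = 1 + (n - 1) T_{ρ₀}`. As `ϖ_{n-1}` is conjugate to `-ϖ₁`, `z_{n-1} = conj z₁`, so
`T_{ρ₀} = (n|z₁|² - 1)/(n - 1) ≥ -1/(n - 1)`. For the colouring bound, the `n` lattice points
`eᵢ - e₀` are pairwise adjacent.
-/

open Complex Finset Equiv ComplexConjugate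

section Orbit

variable {α M : Type*} [Fintype α] [DecidableEq α] [AddCommMonoid M]

theorem Equiv.Perm.card_smul_sum_apply (F : α → M) (a : α) :
    Fintype.card α • ∑ σ : Perm α, F (σ a) = (Fintype.card α).factorial • ∑ x, F x := by
  have hindep : ∀ b, ∑ σ : Perm α, F (σ b) = ∑ σ : Perm α, F (σ a) := fun b =>
    Fintype.sum_equiv (Equiv.mulRight (swap a b)) _ _ fun σ => by simp
  calc Fintype.card α • ∑ σ : Perm α, F (σ a)
      = ∑ b, ∑ σ : Perm α, F (σ b) := by simp [hindep]
    _ = ∑ σ : Perm α, ∑ x, F x := by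
        rw [Finset.sum_comm]
        exact Finset.sum_congr rfl fun σ _ => Equiv.sum_comp σ F
    _ = (Fintype.card α).factorial • ∑ x, F x := by simp [Fintype.card_perm]

end Orbit

section Gencos

variable {n : ℕ}

@[simp]
lemma permAct_apply (p : Perm (Fin n)) (μ : EV n) (j : Fin n) : permAct p μ j = μ (p j) := rfl

lemma permAct_permAct (p q : Perm (Fin n)) (μ : EV n) :
    permAct p (permAct q μ) = permAct (q * p) μ := rfl

lemma permAct_add (p : Perm (Fin n)) (μ ν : EV n) :
    permAct p (μ + ν) = permAct p μ + permAct p ν := rfl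

lemma permAct_neg (p : Perm (Fin n)) (μ : EV n) : permAct p (-μ) = -permAct p μ := rfl

lemma permAct_sub (p : Perm (Fin n)) (μ ν : EV n) :
    permAct p (μ - ν) = permAct p μ - permAct p ν := rfl

lemma permAct_single (p : Perm (Fin n)) (i : Fin n) (a : ℝ) :
    permAct p (EuclideanSpace.single i a) = EuclideanSpace.single (p.symm i) a := by
  ext j
  simp [Equiv.eq_symm_apply]

def planeWave (u x : EV n) : ℂ := exp (-(2 * Real.pi * I) * (inner ℝ x u : ℝ))

lemma planeWave_zero (u : EV n) : planeWave u 0 = 1 := by simp [planeWave]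

lemma planeWave_add (u x y : EV n) : planeWave u (x + y) = planeWave u x * planeWave u y := by
  simp only [planeWave, inner_add_left, ← Complex.exp_add]
  push_cast
  ring_nf

lemma planeWave_neg (u x : EV n) : planeWave u (-x) = conj (planeWave u x) := by
  simp only [planeWave, inner_neg_left, ← Complex.exp_conj, map_mul, map_neg, conj_I, conj_ofReal,
    map_ofNat]
  push_cast
  ring_nf

lemma aGencos_eq (μ u : EV n) :
    aGencos μ u = (Fintype.card (Perm (Fin n)) : ℂ)⁻¹ * ∑ p, planeWave u (permAct p μ) := rfl

lemma aGencos_permAct (q : Perm (Fin n)) (μ u : EV n) : aGencos (permAct q μ) u = aGencos μ u := by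
  simp only [aGencos_eq, permAct_permAct]
  congr 1
  exact Equiv.sum_comp (Equiv.mulLeft q) fun p => planeWave u (permAct p μ)

lemma aGencos_zero (u : EV n) : aGencos 0 u = 1 := by
  have h : ∀ p : Perm (Fin n), permAct p 0 = 0 := fun _ => rfl
  simp [aGencos_eq, h, planeWave_zero]

lemma aGencos_neg (μ u : EV n) : aGencos (-μ) u = conj (aGencos μ u) := by
  simp [aGencos_eq, permAct_neg, planeWave_neg, map_sum]

lemma aGencos_mul_aGencos (μ ν u : EV n) :
    aGencos μ u * aGencos ν u =
      (Fintype.card (Perm (Fin n)) : ℂ)⁻¹ * ∑ r : Perm (Fin n), aGencos (μ + permAct r ν) u := by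
  set c := (Fintype.card (Perm (Fin n)) : ℂ)⁻¹
  calc aGencos μ u * aGencos ν u
      = c * (c * ∑ p, ∑ q, planeWave u (permAct p μ) * planeWave u (permAct q ν)) := by
        rw [aGencos_eq, aGencos_eq, mul_mul_mul_comm, Finset.sum_mul_sum, mul_assoc]
    _ = c * (c * ∑ p, ∑ r, planeWave u (permAct p μ) * planeWave u (permAct p (permAct r ν))) := by
        congr 2
        refine Finset.sum_congr rfl fun p _ => ?_
        exact (Equiv.sum_comp (Equiv.mulRight p) _).symm
    _ = c * ∑ r, c * ∑ p, planeWave u (permAct p (μ + permAct r ν)) := by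
        rw [Finset.sum_comm, Finset.mul_sum]
        simp only [permAct_add, planeWave_add]
    _ = c * ∑ r, aGencos (μ + permAct r ν) u := rfl

lemma aGencos_single_sub_single_of_ne {a b b' : Fin n} (hb : b ≠ a) (hb' : b' ≠ a) (u : EV n) :
    aGencos (EuclideanSpace.single a 1 - EuclideanSpace.single b 1) u =
      aGencos (EuclideanSpace.single a 1 - EuclideanSpace.single b' (1 : ℝ)) u := by
  rw [← aGencos_permAct (swap b b'), permAct_sub, permAct_single, permAct_single, symm_swap,
    swap_apply_of_ne_of_ne hb.symm hb'.symm, swap_apply_left]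

end Gencos

section TypeA

variable {m : ℕ}

lemma aϖ₁_apply (j : Fin (m + 1)) :
    (aϖ₁ : EV (m + 1)) j = (if j = 0 then 1 else 0) - 1 / (m + 1) := by
  simp only [aϖ₁, PiLp.toLp_apply, Fin.val_eq_zero_iff, Nat.cast_add, Nat.cast_one]
  split_ifs <;> ring

lemma aϖlast_apply (j : Fin (m + 1)) :
    (aϖlast : EV (m + 1)) j = 1 / (m + 1) - (if j = Fin.last m then 1 else 0) := by
  have hj : (j : ℕ) = m ↔ j = Fin.last m := by rw [Fin.ext_iff, Fin.val_last]
  simp only [aϖlast, PiLp.toLp_apply, add_tsub_cancel_right, hj, Nat.cast_add, Nat.cast_one]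
  split_ifs <;> ring

lemma aϖ₁_add_permAct_aϖlast (r : Perm (Fin (m + 1))) :
    aϖ₁ + permAct r aϖlast =
      EuclideanSpace.single 0 1 - EuclideanSpace.single (r.symm (Fin.last m)) (1 : ℝ) := by
  ext j
  simp only [PiLp.add_apply, permAct_apply, aϖ₁_apply, aϖlast_apply, PiLp.sub_apply,
    PiLp.single_apply, ← Equiv.eq_symm_apply]
  ring

lemma aϖlast_eq_permAct_neg_aϖ₁ : (aϖlast : EV (m + 1)) = permAct (swap 0 (Fin.last m)) (-aϖ₁) := by
  ext j
  simp only [permAct_apply, PiLp.neg_apply, aϖ₁_apply, aϖlast_apply, swap_apply_eq_iff,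
    swap_apply_left]
  ring

theorem aGencos_aϖ₁_mul_aGencos_aϖlast (u : EV (m + 1)) :
    ((m + 1 : ℕ) : ℂ) * aGencos aϖ₁ u * aGencos aϖlast u
      = ((m + 1 : ℕ) - 1 : ℂ) * aGencos (aϖ₁ + aϖlast) u + 1 := by
  set T := aGencos (aϖ₁ + aϖlast) u
  have horbit : ∀ i : Fin (m + 1),
      aGencos (EuclideanSpace.single 0 1 - EuclideanSpace.single i 1) u =
        if i = 0 then 1 else T := by
    intro i
    split_ifs with hi
    · simp [hi, aGencos_zero]
    · have hlast : Fin.last m ≠ 0 :=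
        (((Fin.pos_iff_ne_zero' i).mpr hi).trans_le i.le_last).ne'
      rw [aGencos_single_sub_single_of_ne hi hlast]
      exact congrArg (aGencos · u) (aϖ₁_add_permAct_aϖlast (m := m) 1).symm
  have hsum : ((m + 1 : ℕ) : ℂ) * ∑ r : Perm (Fin (m + 1)), aGencos (aϖ₁ + permAct r aϖlast) u
      = ((m + 1).factorial : ℂ) * (1 + m * T) := by
    set g : Fin (m + 1) → ℂ := fun i => if i = 0 then 1 else T
    have hcount := Perm.card_smul_sum_apply g (Fin.last m)
    rw [Fintype.card_fin, nsmul_eq_mul, nsmul_eq_mul] at hcount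
    calc ((m + 1 : ℕ) : ℂ) * ∑ r : Perm (Fin (m + 1)), aGencos (aϖ₁ + permAct r aϖlast) u
        = ((m + 1 : ℕ) : ℂ) * ∑ r : Perm (Fin (m + 1)), g (r (Fin.last m)) := by
          simp only [aϖ₁_add_permAct_aϖlast, horbit]
          congr 1
          exact Fintype.sum_equiv (Equiv.inv _) _ _ fun r => rfl
      _ = ((m + 1).factorial : ℂ) * (1 + m * T) := by
          rw [hcount, Fin.sum_univ_succ]
          simp [g, Fin.succ_ne_zero]
  rw [mul_assoc, aGencos_mul_aGencos, Fintype.card_perm, Fintype.card_fin, ← mul_assoc,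
    mul_comm _ (_ : ℂ)⁻¹, mul_assoc, hsum,
    inv_mul_cancel_left₀ (Nat.cast_ne_zero.mpr (Nat.factorial_ne_zero _))]
  push_cast
  ring

theorem aGencos_aϖlast (u : EV (m + 1)) : aGencos aϖlast u = conj (aGencos aϖ₁ u) := by
  rw [aϖlast_eq_permAct_neg_aϖ₁, aGencos_permAct, aGencos_neg]

theorem aGencos_aϖ₁_add_aϖlast (hm : m ≠ 0) (u : EV (m + 1)) :
    aGencos (aϖ₁ + aϖlast) u
      = (((m + 1 : ℕ) * normSq (aGencos aϖ₁ u) - 1) / ((m + 1 : ℕ) - 1) : ℝ) := by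
  have h := aGencos_aϖ₁_mul_aGencos_aϖlast u
  rw [aGencos_aϖlast, mul_assoc, mul_conj] at h
  have hm' : (m : ℂ) ≠ 0 := Nat.cast_ne_zero.mpr hm
  push_cast at h ⊢
  rw [add_sub_cancel_right] at h ⊢
  field_simp
  linear_combination -h

end TypeA

/-- For `A_{n−1}`: the Chebyshev identity
`n z₁ z_{n−1} = (n−1) T_{ϖ₁+ϖ_{n−1}} + 1` holds on the Chebyshev image, where moreover
`z_{n−1} = conj z₁`; consequently `T_{ρ₀} = (n|z₁|² − 1)/(n−1) ≥ −1/(n−1)` on the image,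
and the spectral bound gives `χ(Λ(A_{n−1})) ≥ n` for the lattice graph of the coroot
lattice of `A_{n−1}` (avoiding its strict Voronoi vectors `W ρ₀ = {eᵢ − eⱼ : i ≠ j}`). -/
theorem statement13 {n : ℕ} (hn : 2 ≤ n) :
    -- the identity `n·z₁·z_{n−1} = (n−1)·T_{ρ₀} + 1` on the Chebyshev image:
    (∀ u : EV n, (n : ℂ) * aGencos aϖ₁ u * aGencos aϖlast u
        = (n - 1 : ℂ) * aGencos (aϖ₁ + aϖlast) u + 1) ∧
    -- `z_{n−1}` is the complex conjugate of `z₁` on the image: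
    (∀ u : EV n, aGencos aϖlast u = starRingEnd ℂ (aGencos aϖ₁ u)) ∧
    -- hence `T_{ρ₀} = (n|z₁|² − 1)/(n−1) ≥ −1/(n−1)` on the image:
    (∀ u : EV n, (aGencos (aϖ₁ + aϖlast) u : ℂ)
        = (((n * Complex.normSq (aGencos aϖ₁ u) - 1) / (n - 1) : ℝ) : ℂ)) ∧
    (∀ u : EV n, -(1 / (n - 1 : ℝ)) ≤ (aGencos (aϖ₁ + aϖlast) u).re) ∧
    -- the spectral bound: every proper coloring of the lattice graph of `Λ(A_{n−1})`
    -- uses at least `n` colors: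
    (∀ (k : ℕ) (C : (Fin n → ℤ) → Fin k),
      (∀ u v : Fin n → ℤ, (∑ i, u i) = 0 → (∑ i, v i) = 0 →
        (∃ i j : Fin n, i ≠ j ∧
          ∀ t, u t - v t = (if t = i then 1 else 0) - (if t = j then 1 else 0)) →
        C u ≠ C v) → n ≤ k) := by
  obtain ⟨m, rfl⟩ : ∃ m, n = m + 1 := ⟨n - 1, by omega⟩
  have hm : m ≠ 0 := by omega
  refine ⟨aGencos_aϖ₁_mul_aGencos_aϖlast, aGencos_aϖlast, aGencos_aϖ₁_add_aϖlast hm,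
    fun u => ?_, fun k C hC => ?_⟩
  · rw [aGencos_aϖ₁_add_aϖlast hm, ofReal_re, neg_div']
    have hm' : (0 : ℝ) < (m + 1 : ℕ) - 1 := by push_cast; simpa using Nat.pos_of_ne_zero hm
    gcongr
    linarith [mul_nonneg (Nat.cast_nonneg (α := ℝ) (m + 1)) (normSq_nonneg (aGencos aϖ₁ u))]
  · let w : Fin (m + 1) → Fin (m + 1) → ℤ := fun i => Pi.single i 1 - Pi.single 0 1
    have hw : ∀ i, ∑ t, w i t = 0 := fun i => by simp [w, Finset.sum_sub_distrib]
    have hinj : Function.Injective fun i => C (w i) := fun i j hij =>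
      by_contra fun hne =>
        hC _ _ (hw i) (hw j) ⟨i, j, hne, fun t => by simp [w, Pi.single_apply]⟩ hij
    simpa using Fintype.card_le_of_injective _ hinj
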